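/- Let n, s ∈ ℤ with s ≥ 1, with 4s ≤ n + 1 if n is odd and 4s ≤ n if n is even. Then the difference set V⁴_{n,s} − V⁴_{n,s} is an additive subgroup of ℝ^{n+1} (so V⁴_{n,s} is a translate of a lattice), it contains V²_{n,s} − V²_{n,s} as a subgroup of index 2, and w_{n,s} ∉ V²_{n,s}. In particular, V²_{n,s} is a proper subset of V⁴_{n,s}, so the sublattice affinely generated by the vertices of P(n,s) (namely V²_{n,s}) does not equal V⁴_{n,s}. -/

import Mathlib

open Finset

noncomputable section

/-- The lattice `A_n = {x ∈ ℤ^{n+1} : Σ x_i = 0}`, viewed inside `ℝ^{n+1}`. -/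
def latticeA (n : ℕ) : Set (Fin (n+1) → ℝ) :=
  {x | (∀ i, ∃ m : ℤ, x i = m) ∧ ∑ i, x i = 0}

/-- The point lattice `V_{n,s} = {x ∈ ℤ^{n+1} : Σ x_i = s}`. -/
def Vset (n s : ℕ) : Set (Fin (n+1) → ℝ) :=
  {x | (∀ i, ∃ m : ℤ, x i = m) ∧ ∑ i, x i = (s : ℝ)}

/-- The vertex set `W(n+1,s) = {x ∈ {0,1}^{n+1} : Σ x_i = s}`. -/
def Wset (n s : ℕ) : Set (Fin (n+1) → ℝ) :=
  {x | (∀ i, x i = 0 ∨ x i = 1) ∧ ∑ i, x i = (s : ℝ)}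

/-- The vector `v_{n,s} = ((1/4)^{4s}; 0^{n+1-4s})`. -/
def vns (n s : ℕ) : Fin (n+1) → ℝ := fun i => if (i : ℕ) < 4 * s then 1 / 4 else 0

/-- The vector `t_{n,s} = ((1/2)^{2s}; (−1/2)^{2s}; 0^{n+1-4s})`. -/
def tns (n s : ℕ) : Fin (n+1) → ℝ := fun i =>
  if (i : ℕ) < 2 * s then 1 / 2 else if (i : ℕ) < 4 * s then -(1 / 2) else 0

/-- The point lattice `V²_{n,s} = V_{n,s} ∪ (t_{n,s} + V_{n,s})`. -/
def V2 (n s : ℕ) : Set (Fin (n+1) → ℝ) :=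
  Vset n s ∪ (fun x => tns n s + x) '' Vset n s

/-- The vertex set `S(n,s) = W(n+1,s) ∪ {2v_{n,s} − v : v ∈ W(n+1,s)}`
of the polytope `P(n,s)`. -/
def Sns (n s : ℕ) : Set (Fin (n+1) → ℝ) :=
  Wset n s ∪ (fun v => (2 : ℝ) • vns n s - v) '' Wset n s

/-- The quadratic form `q_{n,s}(x) = 2 Σ_{i<4s} x_i² + Σ_{i≥4s} x_i²`. -/
def qns (n s : ℕ) (x : Fin (n+1) → ℝ) : ℝ :=
  ∑ i : Fin (n+1), (if (i : ℕ) < 4 * s then (2:ℝ) else 1) * (x i) ^ 2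

/-- The standard basis vector `e_1` (1 in coordinate index 1). -/
def e1 (n : ℕ) : Fin (n+1) → ℝ := fun i => if (i : ℕ) = 1 then 1 else 0

/-- For `n` odd, the vector
`w_{n,s} = ((1/4)^{2s}; (−1/4)^{2s}; (1/2)^{n+1−4s}) − ((n+1−4s)/2)·e_1`. -/
def wOdd (n s : ℕ) : Fin (n+1) → ℝ := fun i =>
  (if (i : ℕ) < 2 * s then 1 / 4
   else if (i : ℕ) < 4 * s then -(1 / 4) else 1 / 2)
  - (((n : ℝ) + 1 - 4 * s) / 2) * e1 n i

/-- For `n` even, the vector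
`w_{n,s} = ((1/4)^{2s}; (−1/4)^{2s}; 0; (1/2)^{n−4s}) − ((n−4s)/2)·e_1`. -/
def wEven (n s : ℕ) : Fin (n+1) → ℝ := fun i =>
  (if (i : ℕ) < 2 * s then 1 / 4
   else if (i : ℕ) < 4 * s then -(1 / 4)
   else if (i : ℕ) = 4 * s then 0 else 1 / 2)
  - (((n : ℝ) - 4 * s) / 2) * e1 n i

/-- The vector `w_{n,s}`, defined according to the parity of `n`. -/
def wns (n s : ℕ) : Fin (n+1) → ℝ := if Odd n then wOdd n s else wEven n s

/-- The point lattice `V⁴_{n,s} = V²_{n,s} ∪ (w_{n,s} + V²_{n,s})`. -/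
def V4 (n s : ℕ) : Set (Fin (n+1) → ℝ) :=
  V2 n s ∪ (fun x => wns n s + x) '' V2 n s

/-!
`Vset`, `V2` and `V4` are translates, by the integer point `s • e₀`, of the groups
`A = latticeA n`, `A₂ = A ∪ (t + A)` and `A₄ = A₂ ∪ (w + A₂)`. Adjoining the coset `t + G` to a
subgroup `G` gives a subgroup as soon as `2t ∈ G`; here `2t ∈ A`, and `2w − t ∈ A` because the
`e₁`-correction in `w` makes its coordinates sum to `0`. The difference set of a translate of a
group is the group itself, and `A₂` has index `2` in `A₄` because `w ∉ A₂`: every vector of `A₂`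
has half-integer coordinates, while `w₀ = 1/4`.
-/

namespace AddSubgroup

variable {M : Type*} [AddCommGroup M]

def cosetExtension (G : AddSubgroup M) (t : M) (ht : t + t ∈ G) : AddSubgroup M where
  carrier := {x | x ∈ G ∨ x - t ∈ G}
  zero_mem' := Or.inl G.zero_mem
  add_mem' := by
    rintro a b (ha | ha) (hb | hb)
    · exact Or.inl (add_mem ha hb)
    · exact Or.inr (by convert add_mem ha hb using 1; abel)
    · exact Or.inr (by convert add_mem ha hb using 1; abel)
    · exact Or.inl (by convert add_mem (add_mem ha hb) ht using 1; abel)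
  neg_mem' := by
    rintro a (ha | ha)
    · exact Or.inl (neg_mem ha)
    · exact Or.inr (by convert sub_mem (neg_mem ha) ht using 1; abel)

variable {G : AddSubgroup M} {t : M}

theorem mem_cosetExtension {ht : t + t ∈ G} {x : M} :
    x ∈ G.cosetExtension t ht ↔ x ∈ G ∨ x - t ∈ G :=
  Iff.rfl

theorem le_cosetExtension (ht : t + t ∈ G) : G ≤ G.cosetExtension t ht :=
  fun _ => Or.inl

theorem mem_cosetExtension_self (ht : t + t ∈ G) : t ∈ G.cosetExtension t ht :=
  Or.inr (by rw [sub_self]; exact G.zero_mem)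

theorem cosetExtension_le {K : AddSubgroup M} (ht : t + t ∈ G) (hG : G ≤ K) (htK : t ∈ K) :
    G.cosetExtension t ht ≤ K := by
  rintro x (hx | hx)
  · exact hG hx
  · simpa using add_mem (hG hx) htK

theorem index_addSubgroupOf_cosetExtension (ht : t + t ∈ G) (htG : t ∉ G) :
    (G.addSubgroupOf (G.cosetExtension t ht)).index = 2 := by
  refine index_eq_two_iff.mpr ⟨⟨t, mem_cosetExtension_self ht⟩, fun ⟨x, hx⟩ => ?_⟩
  simp only [mem_addSubgroupOf, coe_add]
  by_cases hxG : x ∈ G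
  · exact Or.inr ⟨hxG, fun h => htG (by simpa using sub_mem h hxG)⟩
  · have hxt : x - t ∈ G := hx.resolve_left hxG
    exact Or.inl ⟨by convert add_mem hxt ht using 1; abel, hxG⟩

end AddSubgroup

section Translates

variable {M : Type*} [AddCommGroup M] {G : AddSubgroup M} {S : Set M} {p : M}

theorem mem_union_image_add_iff (hS : ∀ x, x ∈ S ↔ x - p ∈ G) {t : M} (ht : t + t ∈ G)
    (x : M) : x ∈ S ∪ (fun y => t + y) '' S ↔ x - p ∈ G.cosetExtension t ht := by
  rw [Set.mem_union, Set.mem_image, hS, AddSubgroup.mem_cosetExtension]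
  refine or_congr_right ⟨?_, fun h => ⟨x - t, by rwa [hS, sub_right_comm], by abel⟩⟩
  rintro ⟨y, hy, rfl⟩
  rw [hS] at hy
  convert hy using 1
  abel

theorem setOf_sub_eq_of_mem_iff (hS : ∀ x, x ∈ S ↔ x - p ∈ G) :
    {x | ∃ u ∈ S, ∃ u' ∈ S, x = u - u'} = (G : Set M) := by
  ext x
  rw [Set.mem_ofPred_eq, SetLike.mem_coe]
  constructor
  · rintro ⟨u, hu, u', hu', rfl⟩
    convert sub_mem ((hS u).1 hu) ((hS u').1 hu') using 1
    abel
  · intro hx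
    exact ⟨p + x, by simpa [hS] using hx, p, by simp [hS], by abel⟩

end Translates

def latticeASubgroup (n : ℕ) : AddSubgroup (Fin (n+1) → ℝ) where
  carrier := latticeA n
  zero_mem' := ⟨fun _ => ⟨0, by simp⟩, by simp⟩
  add_mem' := by
    rintro a b ⟨ha, ha'⟩ ⟨hb, hb'⟩
    refine ⟨fun i => ?_, by simp [sum_add_distrib, ha', hb']⟩
    obtain ⟨k, hk⟩ := ha i
    obtain ⟨m, hm⟩ := hb i
    exact ⟨k + m, by simp [hk, hm]⟩
  neg_mem' := by
    rintro a ⟨ha, ha'⟩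
    refine ⟨fun i => ?_, by simp [ha']⟩
    obtain ⟨k, hk⟩ := ha i
    exact ⟨-k, by simp [hk]⟩

theorem mem_Vset_iff_sub_mem {n s : ℕ} {p : Fin (n+1) → ℝ} (hp : p ∈ Vset n s)
    (x : Fin (n+1) → ℝ) : x ∈ Vset n s ↔ x - p ∈ latticeASubgroup n := by
  obtain ⟨hp, hp'⟩ := hp
  refine ⟨fun ⟨hx, hx'⟩ => ⟨fun i => ?_, by simp [sum_sub_distrib, hx', hp']⟩,
    fun ⟨hx, hx'⟩ => ⟨fun i => ?_, ?_⟩⟩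
  · obtain ⟨k, hk⟩ := hx i
    obtain ⟨m, hm⟩ := hp i
    exact ⟨k - m, by simp [hk, hm]⟩
  · obtain ⟨k, hk⟩ := hx i
    obtain ⟨m, hm⟩ := hp i
    exact ⟨k + m, by simp [← hk, ← hm]⟩
  · simpa [sum_sub_distrib, hp', sub_eq_zero] using hx'

theorem single_mem_Vset (n s : ℕ) : Pi.single 0 (s : ℝ) ∈ Vset n s := by
  refine ⟨fun i => ?_, by simp⟩
  rcases eq_or_ne i 0 with rfl | hi
  · exact ⟨s, by simp⟩
  · exact ⟨0, by simp [hi]⟩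

def halfIntegerVectors (ι : Type*) : AddSubgroup (ι → ℝ) :=
  AddSubgroup.pi Set.univ fun _ => AddSubgroup.zmultiples (1 / 2)

theorem mem_halfIntegerVectors {ι : Type*} {x : ι → ℝ} :
    x ∈ halfIntegerVectors ι ↔ ∀ i, ∃ k : ℤ, k • (1 / 2 : ℝ) = x i := by
  simp [halfIntegerVectors, AddSubgroup.mem_pi, AddSubgroup.mem_zmultiples_iff]

theorem mem_halfIntegerVectors_of_int {ι : Type*} {x : ι → ℝ} (hx : ∀ i, ∃ m : ℤ, x i = m) :
    x ∈ halfIntegerVectors ι := by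
  refine mem_halfIntegerVectors.mpr fun i => ?_
  obtain ⟨m, hm⟩ := hx i
  exact ⟨2 * m, by rw [hm, zsmul_eq_mul]; push_cast; ring⟩

theorem tns_mem_halfIntegerVectors (n s : ℕ) : tns n s ∈ halfIntegerVectors (Fin (n+1)) := by
  refine mem_halfIntegerVectors.mpr fun i => ?_
  unfold tns
  split_ifs
  · exact ⟨1, by norm_num⟩
  · exact ⟨-1, by norm_num⟩
  · exact ⟨0, by norm_num⟩

theorem wns_zero {n s : ℕ} (hs : 1 ≤ s) : wns n s 0 = 1 / 4 := by
  have : (0 : ℕ) < 2 * s := by omega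
  unfold wns wOdd wEven e1
  split_ifs <;> simp_all

theorem wns_not_mem_halfIntegerVectors {n s : ℕ} (hs : 1 ≤ s) :
    wns n s ∉ halfIntegerVectors (Fin (n+1)) := by
  intro h
  obtain ⟨k, hk⟩ := mem_halfIntegerVectors.mp h 0
  rw [wns_zero hs, zsmul_eq_mul] at hk
  have : ((2 * k : ℤ) : ℝ) = 1 := by push_cast; linarith
  have : 2 * k = 1 := by exact_mod_cast this
  omega

theorem sum_fin_ite_Ico {m a b : ℕ} (hab : a ≤ b) (hbm : b ≤ m) (c : ℝ) :
    ∑ i : Fin m, (if a ≤ (i : ℕ) ∧ (i : ℕ) < b then c else 0) = ((b : ℝ) - a) * c := by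
  rw [Fin.sum_univ_eq_sum_range (fun i => if a ≤ i ∧ i < b then c else 0), ← sum_filter,
    show (range m).filter (fun i => a ≤ i ∧ i < b) = Ico a b by ext; simp; omega,
    sum_const, Nat.card_Ico, nsmul_eq_mul, Nat.cast_sub hab]

theorem four_mul_le_add_one_of_parity {n s : ℕ} (hodd : Odd n → 4 * s ≤ n + 1)
    (heven : Even n → 4 * s ≤ n) : 4 * s ≤ n + 1 := by
  rcases n.even_or_odd with hn | hn
  · exact (heven hn).trans n.le_succ
  · exact hodd hn

section Sums

variable {n s : ℕ}

theorem sum_tns (h : 4 * s ≤ n + 1) : ∑ i, tns n s i = 0 := by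
  have hblocks (i : Fin (n+1)) : tns n s i =
      (if 0 ≤ (i : ℕ) ∧ (i : ℕ) < 2 * s then 1 / 2 else 0) +
      (if 2 * s ≤ (i : ℕ) ∧ (i : ℕ) < 4 * s then -(1 / 2) else 0) := by
    unfold tns; split_ifs <;> first | ring1 | (exfalso; omega)
  simp only [hblocks, sum_add_distrib]
  rw [sum_fin_ite_Ico (by omega) (by omega), sum_fin_ite_Ico (by omega) h]
  push_cast; ring

theorem sum_e1 (hn : 1 ≤ n) : ∑ i, e1 n i = 1 := by
  have hblocks (i : Fin (n+1)) : e1 n i = if 1 ≤ (i : ℕ) ∧ (i : ℕ) < 2 then 1 else 0 := by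
    unfold e1; split_ifs <;> first | rfl | (exfalso; omega)
  simp only [hblocks]
  rw [sum_fin_ite_Ico (by omega) (by omega)]
  norm_num

theorem sum_wOdd (hs : 1 ≤ s) (h : 4 * s ≤ n + 1) : ∑ i, wOdd n s i = 0 := by
  have hblocks (i : Fin (n+1)) : wOdd n s i =
      (if 0 ≤ (i : ℕ) ∧ (i : ℕ) < 2 * s then 1 / 4 else 0) +
      (if 2 * s ≤ (i : ℕ) ∧ (i : ℕ) < 4 * s then -(1 / 4) else 0) +
      (if 4 * s ≤ (i : ℕ) ∧ (i : ℕ) < n + 1 then 1 / 2 else 0) -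
      ((n + 1 - 4 * s) / 2) * e1 n i := by
    unfold wOdd; congr 1; split_ifs <;> first | ring1 | (exfalso; omega)
  simp only [hblocks, sum_add_distrib, sum_sub_distrib, ← mul_sum]
  rw [sum_fin_ite_Ico (by omega) (by omega), sum_fin_ite_Ico (by omega) h,
    sum_fin_ite_Ico h le_rfl, sum_e1 (by omega)]
  push_cast; ring

theorem sum_wEven (hs : 1 ≤ s) (h : 4 * s ≤ n) : ∑ i, wEven n s i = 0 := by
  have hblocks (i : Fin (n+1)) : wEven n s i =
      (if 0 ≤ (i : ℕ) ∧ (i : ℕ) < 2 * s then 1 / 4 else 0) +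
      (if 2 * s ≤ (i : ℕ) ∧ (i : ℕ) < 4 * s then -(1 / 4) else 0) +
      (if 4 * s + 1 ≤ (i : ℕ) ∧ (i : ℕ) < n + 1 then 1 / 2 else 0) -
      ((n - 4 * s) / 2) * e1 n i := by
    unfold wEven; congr 1; split_ifs <;> first | ring1 | (exfalso; omega)
  simp only [hblocks, sum_add_distrib, sum_sub_distrib, ← mul_sum]
  rw [sum_fin_ite_Ico (by omega) (by omega), sum_fin_ite_Ico (by omega) (by omega),
    sum_fin_ite_Ico (by omega) le_rfl, sum_e1 (by omega)]
  push_cast; ring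

theorem sum_wns (hs : 1 ≤ s) (hodd : Odd n → 4 * s ≤ n + 1) (heven : Even n → 4 * s ≤ n) :
    ∑ i, wns n s i = 0 := by
  unfold wns
  split_ifs with hn
  · exact sum_wOdd hs (hodd hn)
  · exact sum_wEven hs (heven (Nat.not_odd_iff_even.mp hn))

end Sums

section Generators

variable {n s : ℕ}

theorem tns_add_tns_mem_latticeASubgroup (h : 4 * s ≤ n + 1) :
    tns n s + tns n s ∈ latticeASubgroup n := by
  refine ⟨fun i => ?_, by simp [sum_add_distrib, sum_tns h]⟩
  simp only [Pi.add_apply, tns]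
  split_ifs
  · exact ⟨1, by norm_num⟩
  · exact ⟨-1, by norm_num⟩
  · exact ⟨0, by norm_num⟩

theorem wns_add_wns_sub_tns_mem_latticeASubgroup (hs : 1 ≤ s)
    (hodd : Odd n → 4 * s ≤ n + 1) (heven : Even n → 4 * s ≤ n) :
    wns n s + wns n s - tns n s ∈ latticeASubgroup n := by
  refine ⟨fun i => ?_, ?_⟩
  · simp only [Pi.sub_apply, Pi.add_apply]
    unfold wns
    split_ifs
    · unfold wOdd tns e1
      split_ifs <;> first
        | exact ⟨0, by push_cast; ring1⟩
        | exact ⟨1, by push_cast; ring1⟩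
        | exact ⟨4 * s - (n + 1), by push_cast; ring1⟩
        | (exfalso; omega)
    · unfold wEven tns e1
      split_ifs <;> first
        | exact ⟨0, by push_cast; ring1⟩
        | exact ⟨1, by push_cast; ring1⟩
        | exact ⟨4 * s - n, by push_cast; ring1⟩
        | (exfalso; omega)
  · simp [sum_sub_distrib, sum_add_distrib, sum_wns hs hodd heven,
      sum_tns (four_mul_le_add_one_of_parity hodd heven)]

end Generators

/-- `V⁴_{n,s} − V⁴_{n,s}` is a lattice containing `V²_{n,s} − V²_{n,s}` as a subgroup of
index 2, `w_{n,s} ∉ V²_{n,s}`, and `V²_{n,s}` — the lattice affinely generated by the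
vertices of `P(n,s)` — is a proper subset of `V⁴_{n,s}`. -/
theorem V4_extends_V2 (n s : ℕ) (hs : 1 ≤ s)
    (hodd : Odd n → 4 * s ≤ n + 1) (heven : Even n → 4 * s ≤ n) :
    (∃ G4 G2 : AddSubgroup (Fin (n+1) → ℝ),
      (G4 : Set (Fin (n+1) → ℝ)) = {x | ∃ u ∈ V4 n s, ∃ u' ∈ V4 n s, x = u - u'} ∧
      (G2 : Set (Fin (n+1) → ℝ)) = {x | ∃ u ∈ V2 n s, ∃ u' ∈ V2 n s, x = u - u'} ∧
      G2 ≤ G4 ∧ (G2.addSubgroupOf G4).index = 2) ∧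
    wns n s ∉ V2 n s ∧
    V2 n s ⊂ V4 n s := by
  set A2 := (latticeASubgroup n).cosetExtension (tns n s)
    (tns_add_tns_mem_latticeASubgroup (four_mul_le_add_one_of_parity hodd heven))
  have hww : wns n s + wns n s ∈ A2 :=
    Or.inr (wns_add_wns_sub_tns_mem_latticeASubgroup hs hodd heven)
  set A4 := A2.cosetExtension (wns n s) hww
  set p : Fin (n+1) → ℝ := Pi.single 0 (s : ℝ)
  have hV2 : ∀ x, x ∈ V2 n s ↔ x - p ∈ A2 :=
    mem_union_image_add_iff (mem_Vset_iff_sub_mem (single_mem_Vset n s)) _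
  have hV4 : ∀ x, x ∈ V4 n s ↔ x - p ∈ A4 := mem_union_image_add_iff hV2 hww
  have hA2 : A2 ≤ halfIntegerVectors (Fin (n+1)) :=
    AddSubgroup.cosetExtension_le _ (fun _ hx => mem_halfIntegerVectors_of_int hx.1)
      (tns_mem_halfIntegerVectors n s)
  have hw : wns n s ∉ A2 := fun h => wns_not_mem_halfIntegerVectors hs (hA2 h)
  refine ⟨⟨A4, A2, (setOf_sub_eq_of_mem_iff hV4).symm, (setOf_sub_eq_of_mem_iff hV2).symm,
      AddSubgroup.le_cosetExtension hww, AddSubgroup.index_addSubgroupOf_cosetExtension hww hw⟩,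
    fun h => ?_,
    (Set.ssubset_iff_of_subset Set.subset_union_left).mpr ⟨p + wns n s, ?_, fun h => hw ?_⟩⟩
  · refine wns_not_mem_halfIntegerVectors (n := n) hs ?_
    simpa [p] using add_mem (hA2 ((hV2 _).1 h))
      (mem_halfIntegerVectors_of_int (single_mem_Vset n s).1)
  · exact (hV4 _).2 (by simpa using AddSubgroup.mem_cosetExtension_self hww)
  · simpa using (hV2 _).1 h
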